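/- Let n and d' be positive integers with 1 ≤ d' < n/2, and let λ be a real number with 2/3 < λ < 1 such that λd' is a positive integer. Set δ = d'/n. Then ∑_{w=λd'}^{d'} C(n,w) · ∑_{i=1}^{d'} ∑_{j=⌈(w+i−d')/2⌉⁺}^{min{w,i}} C(w,j)·C(n−w,i−j) ≤ (nλδ + 1) · 2^{n·( H₂(δ) + λδ + (1−λδ)·H₂( (δ − λδ/2)/(1−λδ) ) )}. -/

import Mathlib

open Finset

/-- `⌈(w+i-d')/2⌉⁺`: the smallest nonnegative integer `m` with `m ≥ (w+i-d')/2`. -/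
def ceilPos (w i d' : ℕ) : ℕ := (((w : ℤ) + i - d' + 1) / 2).toNat

/-- The binary entropy function. -/
noncomputable def binH (x : ℝ) : ℝ := -x * Real.logb 2 x - (1 - x) * Real.logb 2 (1 - x)

/-!
Fix a weight `w ∈ [λd', d']` and put `x_w = (d' - w/2)/(n - w) ≤ 1/2`. The map
`(i, j) ↦ (j, i - j)` embeds the index set of the inner double sum into
`[0, w] × [0, d' - ⌈w/2⌉]`, so the inner sum is at most `2^w` times the volume of a Hamming ball
of radius `(n - w) x_w` in `{0,1}^(n-w)`, that is at most `2^(w + (n - w) H₂(x_w))`; likewise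
`C(n, w) ≤ 2^(n H₂(δ))`. In natural logarithms the exponent `w + (n - w) H₂(x_w)` has derivative
`log 2 + ½ log (ab) - log (a + b) ≤ 0`, where `a = d' - w/2`, `b = n - d' - w/2` (AM-GM), so
every term is bounded by the one at `w = λd'`, and there are `d' + 1 - λd' ≤ λd' + 1` terms
because `λ > 1/2`.
-/

open Real

lemma two_rpow_neg_mul_binH (N : ℝ) {x : ℝ} (hx0 : 0 < x) (hx1 : x < 1) :
    (2 : ℝ) ^ (-(N * binH x)) = x ^ (N * x) * (1 - x) ^ (N * (1 - x)) := by
  rw [rpow_def_of_pos two_pos, rpow_def_of_pos hx0, rpow_def_of_pos (sub_pos.2 hx1),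
    ← exp_add, binH, logb, logb]
  congr 1
  field_simp
  ring

lemma two_rpow_neg_mul_binH_le {N k : ℕ} {x : ℝ} (hx0 : 0 < x) (hx : x ≤ 1 / 2)
    (hk : (k : ℝ) ≤ N * x) :
    (2 : ℝ) ^ (-(N * binH x)) ≤ x ^ k * (1 - x) ^ (N - k) := by
  have hy : 0 < 1 - x := by linarith
  have hkN : k ≤ N := by
    have : (k : ℝ) ≤ N := hk.trans (by nlinarith [N.cast_nonneg (α := ℝ)])
    exact_mod_cast this
  have ht0 : 0 < x / (1 - x) := div_pos hx0 hy
  have ht1 : x / (1 - x) ≤ 1 := (div_le_one hy).2 (by linarith)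
  -- both sides are `(1 - x) ^ N` times a power of `x / (1 - x) ≤ 1`
  calc (2 : ℝ) ^ (-(N * binH x)) = (x / (1 - x)) ^ ((N : ℝ) * x) * (1 - x) ^ (N : ℝ) := by
        rw [two_rpow_neg_mul_binH _ hx0 (by linarith), div_rpow hx0.le hy.le, mul_one_sub,
          rpow_sub hy]
        field_simp
    _ ≤ (x / (1 - x)) ^ (k : ℝ) * (1 - x) ^ (N : ℝ) :=
        mul_le_mul_of_nonneg_right (rpow_le_rpow_of_exponent_ge ht0 ht1 hk) (by positivity)
    _ = x ^ k * (1 - x) ^ (N - k) := by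
        rw [rpow_natCast, rpow_natCast, div_pow, pow_sub₀ _ hy.ne' hkN]
        field_simp

lemma sum_range_choose_le_two_rpow_binH {N m : ℕ} {x : ℝ} (hx0 : 0 < x) (hx : x ≤ 1 / 2)
    (hm : (m : ℝ) ≤ N * x) :
    ∑ k ∈ range (m + 1), (N.choose k : ℝ) ≤ 2 ^ (N * binH x) := by
  have hmN : m ≤ N := by
    have : (m : ℝ) ≤ N := hm.trans (by nlinarith [N.cast_nonneg (α := ℝ)])
    exact_mod_cast this
  have hpos : (0 : ℝ) < 2 ^ (-(N * binH x)) := rpow_pos_of_pos two_pos _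
  have hbinom : ∑ k ∈ range (N + 1), (N.choose k : ℝ) * (x ^ k * (1 - x) ^ (N - k)) = 1 := by
    have h := (add_pow x (1 - x) N).symm
    rw [add_sub_cancel, one_pow] at h
    exact (sum_congr rfl fun k _ => by ring).trans h
  rw [← mul_le_mul_iff_left₀ hpos, ← rpow_add two_pos, add_neg_cancel, rpow_zero, sum_mul,
    ← hbinom]
  calc ∑ k ∈ range (m + 1), (N.choose k : ℝ) * 2 ^ (-(N * binH x))
      ≤ ∑ k ∈ range (m + 1), (N.choose k : ℝ) * (x ^ k * (1 - x) ^ (N - k)) := by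
        refine sum_le_sum fun k hk => ?_
        have hkm : (k : ℝ) ≤ m := by exact_mod_cast Nat.lt_succ_iff.1 (mem_range.1 hk)
        gcongr
        exact two_rpow_neg_mul_binH_le hx0 hx (hkm.trans hm)
    _ ≤ ∑ k ∈ range (N + 1), (N.choose k : ℝ) * (x ^ k * (1 - x) ^ (N - k)) := by
        refine sum_le_sum_of_subset_of_nonneg (range_subset_range.2 (by omega)) ?_
        intro k _ _
        have : 0 ≤ 1 - x := by linarith
        positivity

noncomputable def weightExponent (N d w : ℝ) : ℝ := w + (N - w) * binH ((d - w / 2) / (N - w))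

lemma mul_binH_div_mul_log_two {a b : ℝ} (ha : a ≠ 0) (hb : b ≠ 0) (hab : a + b ≠ 0) :
    (a + b) * binH (a / (a + b)) * log 2 = negMulLog a + negMulLog b - negMulLog (a + b) := by
  have h1 : 1 - a / (a + b) = b / (a + b) := by field_simp; ring
  rw [binH, h1, logb, logb, log_div ha hab, log_div hb hab, negMulLog, negMulLog, negMulLog]
  field_simp
  ring

lemma weightExponent_mul_log_two {N d w : ℝ} (ha : w < 2 * d) (hb : w < 2 * (N - d)) :
    weightExponent N d w * log 2
      = w * log 2 + negMulLog (d - w / 2) + negMulLog (N - d - w / 2) - negMulLog (N - w) := by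
  have hsplit : N - w = (d - w / 2) + (N - d - w / 2) := by ring
  rw [weightExponent, add_mul, hsplit, mul_binH_div_mul_log_two (by linarith) (by linarith)
    (by linarith)]
  ring

lemma hasDerivAt_negMulLog_sub_mul (c r : ℝ) {w : ℝ} (h : c - r * w ≠ 0) :
    HasDerivAt (fun y => negMulLog (c - r * y)) (r * (log (c - r * w) + 1)) w := by
  have hlin : HasDerivAt (fun y : ℝ => c - r * y) (-r) w := by
    simpa using ((hasDerivAt_id w).const_mul r).const_sub c
  rw [show r * (log (c - r * w) + 1) = (-log (c - r * w) - 1) * -r by ring]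
  exact (hasDerivAt_negMulLog h).comp w hlin

lemma log_two_add_half_mul_log_add_log_le {a b : ℝ} (ha : 0 < a) (hb : 0 < b) :
    log 2 + 2⁻¹ * (log a + log b) ≤ log (a + b) := by
  have h := log_le_log (by positivity) (four_mul_le_sq_add a b)
  rw [show (4 : ℝ) = 2 ^ 2 by norm_num, log_mul (by positivity) hb.ne',
    log_mul (by positivity) ha.ne', log_pow, log_pow] at h
  push_cast at h
  linarith

lemma antitoneOn_weightExponent {N d : ℝ} (hd : 0 < d) (hdN : 2 * d < N) :
    AntitoneOn (weightExponent N d) (Set.Iic d) := by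
  -- `weightExponent N d · log 2`, written in the shape `c - r * w` of the derivative lemma above
  set G : ℝ → ℝ := fun w =>
    w * log 2 + negMulLog (d - 2⁻¹ * w) + negMulLog (N - d - 2⁻¹ * w) - negMulLog (N - 1 * w)
  have hG : ∀ w ∈ Set.Iic d, weightExponent N d w = G w / log 2 := by
    intro w hw
    rw [eq_div_iff (log_pos one_lt_two).ne', weightExponent_mul_log_two (by linarith [hw.out])
      (by linarith [hw.out])]
    simp only [G, div_eq_inv_mul, one_mul]
  have hderiv : ∀ w ∈ Set.Iic d, HasDerivAt G
      (log 2 + 2⁻¹ * (log (d - 2⁻¹ * w) + 1) + 2⁻¹ * (log (N - d - 2⁻¹ * w) + 1)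
        - 1 * (log (N - 1 * w) + 1)) w := by
    intro w hw
    have hw : w ≤ d := hw
    exact ((((hasDerivAt_id w).mul_const (log 2)).add
      (hasDerivAt_negMulLog_sub_mul d 2⁻¹ (by linarith))).add
      (hasDerivAt_negMulLog_sub_mul (N - d) 2⁻¹ (by linarith))).sub
      (hasDerivAt_negMulLog_sub_mul N 1 (by linarith)) |>.congr_deriv (by simp)
  have hGanti : AntitoneOn G (Set.Iic d) := by
    refine antitoneOn_of_deriv_nonpos (convex_Iic d)
      (fun w hw => (hderiv w hw).continuousAt.continuousWithinAt)
      (fun w hw => (hderiv w (interior_subset hw)).differentiableAt.differentiableWithinAt) ?_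
    intro w hw
    rw [(hderiv w (interior_subset hw)).deriv]
    have hw : w < d := by simpa using hw
    have := log_two_add_half_mul_log_add_log_le (a := d - 2⁻¹ * w) (b := N - d - 2⁻¹ * w)
      (by linarith) (by linarith)
    rw [show N - 1 * w = (d - 2⁻¹ * w) + (N - d - 2⁻¹ * w) by ring]
    linarith
  intro x hx y hy hxy
  rw [hG x hx, hG y hy]
  exact div_le_div_of_nonneg_right (hGanti hx hy hxy) (log_pos one_lt_two).le

lemma sum_ceilPos_le_two_pow_mul_sum_choose (n d' w : ℕ) :
    ∑ i ∈ Icc 1 d', ∑ j ∈ Icc (ceilPos w i d') (min w i),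
        (w.choose j : ℝ) * ((n - w).choose (i - j) : ℝ)
      ≤ 2 ^ w * ∑ k ∈ range (d' - (w + 1) / 2 + 1), ((n - w).choose k : ℝ) := by
  set A := (Icc 1 d').sigma fun i => Icc (ceilPos w i d') (min w i)
  have hA : ∀ p ∈ A, p.1 ≤ d' ∧ w + p.1 ≤ d' + 2 * p.2 ∧ p.2 ≤ w ∧ p.2 ≤ p.1 := by
    intro p hp
    simp only [A, mem_sigma, mem_Icc, ceilPos, Int.toNat_le] at hp
    omega
  -- `(i, j) ↦ (j, i - j)` is injective on `A` and lands in `[0, w] × [0, d' - ⌈w/2⌉]`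
  have hinj : Set.InjOn (fun p : (_ : ℕ) × ℕ => (p.2, p.1 - p.2)) A := by
    intro p hp q hq hpq
    obtain ⟨-, -, -, hp⟩ := hA p hp
    obtain ⟨-, -, -, hq⟩ := hA q hq
    simp only [Prod.mk.injEq] at hpq
    exact Sigma.ext (by omega) (heq_of_eq hpq.1)
  have hmaps : A.image (fun p => (p.2, p.1 - p.2))
      ⊆ range (w + 1) ×ˢ range (d' - (w + 1) / 2 + 1) := by
    intro q hq
    obtain ⟨p, hp, rfl⟩ := mem_image.1 hq
    have := hA p hp
    simp only [mem_product, mem_range]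
    omega
  calc ∑ i ∈ Icc 1 d', ∑ j ∈ Icc (ceilPos w i d') (min w i),
        (w.choose j : ℝ) * ((n - w).choose (i - j) : ℝ)
      = ∑ q ∈ A.image (fun p => (p.2, p.1 - p.2)),
          (w.choose q.1 : ℝ) * ((n - w).choose q.2 : ℝ) := by
        rw [sum_image hinj, sum_sigma]
    _ ≤ ∑ q ∈ range (w + 1) ×ˢ range (d' - (w + 1) / 2 + 1),
          (w.choose q.1 : ℝ) * ((n - w).choose q.2 : ℝ) :=
        sum_le_sum_of_subset_of_nonneg hmaps fun _ _ _ => by positivity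
    _ = 2 ^ w * ∑ k ∈ range (d' - (w + 1) / 2 + 1), ((n - w).choose k : ℝ) := by
        simp only [sum_product, ← sum_mul_sum, ← Nat.cast_sum, Nat.sum_range_choose,
          Nat.cast_pow, Nat.cast_ofNat]

lemma sum_ceilPos_le_two_rpow_weightExponent {n d' w : ℕ} (hd : 1 ≤ d') (hdn : 2 * d' < n)
    (hw : w ≤ d') :
    ∑ i ∈ Icc 1 d', ∑ j ∈ Icc (ceilPos w i d') (min w i),
        (w.choose j : ℝ) * ((n - w).choose (i - j) : ℝ)
      ≤ 2 ^ weightExponent n d' w := by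
  have hd' : (1 : ℝ) ≤ d' := by exact_mod_cast hd
  have hdn' : 2 * (d' : ℝ) < n := by exact_mod_cast hdn
  have hw' : (w : ℝ) ≤ d' := by exact_mod_cast hw
  have hnw : ((n - w : ℕ) : ℝ) = n - w := Nat.cast_sub (by omega)
  have hpos : (0 : ℝ) < n - w := by linarith
  set x := (d' - w / 2 : ℝ) / (n - w)
  have hx0 : 0 < x := div_pos (by linarith) hpos
  have hx : x ≤ 1 / 2 := by rw [div_le_iff₀ hpos]; linarith
  have hm : ((d' - (w + 1) / 2 : ℕ) : ℝ) ≤ (n - w : ℕ) * x := by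
    have h : 2 * (d' - (w + 1) / 2) + w ≤ 2 * d' := by omega
    have h' : (2 * (d' - (w + 1) / 2 : ℕ) + w : ℝ) ≤ 2 * d' := by exact_mod_cast h
    rw [hnw, mul_div_cancel₀ _ hpos.ne']
    linarith
  calc _ ≤ 2 ^ w * ∑ k ∈ range (d' - (w + 1) / 2 + 1), ((n - w).choose k : ℝ) :=
        sum_ceilPos_le_two_pow_mul_sum_choose n d' w
    _ ≤ 2 ^ (w : ℝ) * 2 ^ ((n - w : ℕ) * binH x) := by
        rw [rpow_natCast]
        gcongr
        exact sum_range_choose_le_two_rpow_binH hx0 hx hm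
    _ = 2 ^ weightExponent n d' w := by
        rw [weightExponent, hnw, rpow_add two_pos]

lemma choose_le_two_rpow_binH {N k : ℕ} {x : ℝ} (hx0 : 0 < x) (hx : x ≤ 1 / 2)
    (hk : (k : ℝ) ≤ N * x) : (N.choose k : ℝ) ≤ 2 ^ (N * binH x) :=
  (single_le_sum (f := fun i => (N.choose i : ℝ)) (fun _ _ => by positivity)
    (self_mem_range_succ k)).trans (sum_range_choose_le_two_rpow_binH hx0 hx hk)

lemma mul_binH_add_eq_add_weightExponent {N d lam : ℝ} (hN : N ≠ 0) (hlam : N - lam * d ≠ 0) :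
    N * (binH (d / N) + lam * (d / N) +
        (1 - lam * (d / N)) * binH ((d / N - lam * (d / N) / 2) / (1 - lam * (d / N))))
      = N * binH (d / N) + weightExponent N d (lam * d) := by
  have harg : (d / N - lam * (d / N) / 2) / (1 - lam * (d / N))
      = (d - lam * d / 2) / (N - lam * d) := by
    rw [div_eq_div_iff (by field_simp; exact div_ne_zero hlam hN) hlam]
    field_simp
  rw [harg, weightExponent]
  field_simp
  ring

theorem statement18_general (n d' : ℕ) (hd : 1 ≤ d') (hdn : 2 * d' < n)
    (lam : ℝ) (hlam0 : 2 / 3 < lam) (hlam1 : lam < 1)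
    (w0 : ℕ) (hw0 : (w0 : ℝ) = lam * (d' : ℝ)) :
    (∑ w ∈ Finset.Icc w0 d', (n.choose w : ℝ) *
      ∑ i ∈ Finset.Icc 1 d', ∑ j ∈ Finset.Icc (ceilPos w i d') (min w i),
        (w.choose j : ℝ) * ((n - w).choose (i - j) : ℝ))
    ≤ ((n : ℝ) * lam * ((d' : ℝ) / n) + 1) *
      (2 : ℝ) ^ ((n : ℝ) * (binH ((d' : ℝ) / n) + lam * ((d' : ℝ) / n) +
        (1 - lam * ((d' : ℝ) / n)) *
          binH ((((d' : ℝ) / n) - lam * ((d' : ℝ) / n) / 2) / (1 - lam * ((d' : ℝ) / n))))) := by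
  have hd' : (1 : ℝ) ≤ d' := by exact_mod_cast hd
  have hdn' : 2 * (d' : ℝ) < n := by exact_mod_cast hdn
  have hn : (0 : ℝ) < n := by linarith
  have hw0d' : (w0 : ℝ) ≤ d' := by rw [hw0]; nlinarith
  have hw0d : w0 ≤ d' := by exact_mod_cast hw0d'
  have hdw0 : d' ≤ 2 * w0 := by exact_mod_cast (show (d' : ℝ) ≤ 2 * w0 by rw [hw0]; nlinarith)
  have hδ0 : 0 < (d' : ℝ) / n := by positivity
  have hδ : (d' : ℝ) / n ≤ 1 / 2 := by rw [div_le_iff₀ hn]; linarith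
  rw [mul_binH_add_eq_add_weightExponent hn.ne' (by rw [← hw0]; linarith), ← hw0,
    rpow_add two_pos, show (n : ℝ) * lam * (d' / n) = w0 by rw [hw0]; field_simp]
  calc _ ≤ ∑ w ∈ Icc w0 d', (2 : ℝ) ^ (n * binH (d' / n)) * 2 ^ weightExponent n d' w0 := by
        refine sum_le_sum fun w hw => ?_
        obtain ⟨hw0w, hwd⟩ := mem_Icc.1 hw
        have hwd' : (w : ℝ) ≤ d' := by exact_mod_cast hwd
        gcongr
        · exact choose_le_two_rpow_binH hδ0 hδ (by rw [mul_div_cancel₀ _ hn.ne']; exact hwd')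
        · refine (sum_ceilPos_le_two_rpow_weightExponent hd hdn hwd).trans
            (rpow_le_rpow_of_exponent_le one_le_two ?_)
          exact antitoneOn_weightExponent (by linarith) hdn' hw0d' hwd' (by exact_mod_cast hw0w)
    _ ≤ (w0 + 1) * ((2 : ℝ) ^ (n * binH (d' / n)) * 2 ^ weightExponent n d' w0) := by
        rw [sum_const, nsmul_eq_mul, Nat.card_Icc]
        gcongr
        exact_mod_cast (show d' + 1 - w0 ≤ w0 + 1 by omega)

theorem statement18 (n d' : ℕ) (hd : 1 ≤ d') (hdn : 2 * d' < n)
    (lam : ℝ) (hlam0 : 2 / 3 < lam) (hlam1 : lam < 1)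
    (w0 : ℕ) (hw0 : (w0 : ℝ) = lam * (d' : ℝ)) (hw01 : 1 ≤ w0) :
    (∑ w ∈ Finset.Icc w0 d', (n.choose w : ℝ) *
      ∑ i ∈ Finset.Icc 1 d', ∑ j ∈ Finset.Icc (ceilPos w i d') (min w i),
        (w.choose j : ℝ) * ((n - w).choose (i - j) : ℝ))
    ≤ ((n : ℝ) * lam * ((d' : ℝ) / n) + 1) *
      (2 : ℝ) ^ ((n : ℝ) * (binH ((d' : ℝ) / n) + lam * ((d' : ℝ) / n) +
        (1 - lam * ((d' : ℝ) / n)) *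
          binH ((((d' : ℝ) / n) - lam * ((d' : ℝ) / n) / 2) / (1 - lam * ((d' : ℝ) / n))))) :=
  statement18_general n d' hd hdn lam hlam0 hlam1 w0 hw0
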